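/- arXiv:1112.1809 — 2 statements merged into one kernel-verified Lean document; each statement's English description precedes it below -/
import Mathlib

section
/- Let D be an oriented knot diagram with n ≥ 1 crossings, modeled by a Gauss code g. Then the sum over all crossings c of t^(d (u c)) (the sum of t^(d e) over all edges e whose terminal endpoint is an under-crossing) equals t · X_D(t) in ℤ[t]. -/
open Polynomial Finset

/-- An oriented knot diagram with `n` crossings, modeled by its oriented Gauss code. -/
structure GaussCode (n : ℕ) where
  g : ZMod (2 * n) → Fin n × Bool
  o : Fin n → ZMod (2 * n)
  u : Fin n → ZMod (2 * n)
  over_iff : ∀ (c : Fin n) (e : ZMod (2 * n)), g e = (c, true) ↔ e = o c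
  under_iff : ∀ (c : Fin n) (e : ZMod (2 * n)), g e = (c, false) ↔ e = u c

namespace GaussCode

variable {n : ℕ}

/-- The warping degree of the base position `e`: the number of crossings whose
under-passage occurs strictly before its over-passage when traversing the diagram
starting at `e`. -/
def d (D : GaussCode n) (e : ZMod (2 * n)) : ℕ :=
  (Finset.univ.filter fun c : Fin n => (D.u c - e).val < (D.o c - e).val).card

/-- The warping crossing polynomial. -/
noncomputable def Xpoly (D : GaussCode n) : Polynomial ℤ :=
  ∑ c : Fin n, Polynomial.X ^ D.d (D.o c)

/-- The warping polynomial. -/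
noncomputable def Wpoly (D : GaussCode n) : Polynomial ℤ :=
  ∑ k ∈ Finset.range (2 * n), Polynomial.X ^ D.d (k : ZMod (2 * n))

/-- The warping degree of the diagram: minimum over all base positions. -/
noncomputable def wdeg (D : GaussCode n) : ℕ :=
  sInf (Set.range fun e : ZMod (2 * n) => D.d e)

/-- The diagram is alternating. -/
def Alternating (D : GaussCode n) : Prop :=
  ∀ e : ZMod (2 * n), (D.g e).2 ≠ (D.g (e + 1)).2

end GaussCode

/-!
Moving the base point one step forward changes the warping degree by `+1` when it passes an
over-passage and by `-1` when it passes an under-passage. Summing `t ^ d e` over all positions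
before and after this rotation gives `A + B = t A + t⁻¹ B`, where `A = X_D(t)` and `B` is the sum
over under-passages; hence `(t - 1) B = (t - 1) t A`, and `t - 1` cancels in `ℤ[t]`.
-/

namespace ZMod

variable {m : ℕ} [NeZero m]

theorem val_sub_one_add_one (x : ZMod m) : (x - 1).val + 1 = if x = 0 then m else x.val := by
  obtain ⟨k, rfl⟩ : ∃ k, m = k + 1 := Nat.exists_eq_succ_of_ne_zero (NeZero.ne m)
  revert x
  change ∀ x : Fin (k + 1), ((x - 1 : Fin (k + 1)) : ℕ) + 1 = if x = 0 then k + 1 else x.val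
  intro x
  rw [Fin.coe_sub_one]
  split_ifs with h
  · rfl
  · have := Fin.pos_iff_ne_zero.2 h
    omega

theorem val_sub_add_one_lt_iff {a b : ZMod m} (hab : a ≠ b) (e : ZMod m) :
    (a - (e + 1)).val < (b - (e + 1)).val ↔ ((a - e).val < (b - e).val ∨ b = e) ∧ a ≠ e := by
  rw [← Nat.add_lt_add_iff_right (k := 1), sub_add_eq_sub_sub, sub_add_eq_sub_sub,
    val_sub_one_add_one, val_sub_one_add_one]
  simp only [sub_eq_zero]
  have ha := (a - e).val_lt
  have hb := (b - e).val_lt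
  split_ifs with hae hbe hbe
  · exact absurd (hae.trans hbe.symm) hab
  · simp [hae, hb.le]
  · simp [hbe, hae, ha]
  · simp [hae, hbe]

end ZMod

namespace GaussCode

variable {n : ℕ} (D : GaussCode n)

@[simp]
theorem g_o (c : Fin n) : D.g (D.o c) = (c, true) :=
  (D.over_iff c _).2 rfl

@[simp]
theorem g_u (c : Fin n) : D.g (D.u c) = (c, false) :=
  (D.under_iff c _).2 rfl

theorem o_ne_u (c c' : Fin n) : D.o c ≠ D.u c' := fun h => by
  simpa using congrArg D.g h

theorem o_injective : Function.Injective D.o := fun a b h => by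
  simpa using congrArg D.g h

theorem u_injective : Function.Injective D.u := fun a b h => by
  simpa using congrArg D.g h

theorem sum_eq_sum_o_add_sum_u [NeZero n] {M : Type*} [AddCommMonoid M]
    (f : ZMod (2 * n) → M) :
    ∑ e, f e = ∑ c, f (D.o c) + ∑ c, f (D.u c) := by
  have hbij : Function.Bijective (Sum.elim D.o D.u) := by
    rw [Fintype.bijective_iff_injective_and_card]
    exact ⟨D.o_injective.sumElim D.u_injective D.o_ne_u, by simp [two_mul]⟩
  rw [← Fintype.sum_bijective _ hbij (f ∘ Sum.elim D.o D.u) f (fun _ => rfl),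
    Fintype.sum_sum_type]
  rfl

def warpingCrossings (e : ZMod (2 * n)) : Finset (Fin n) :=
  univ.filter fun c => (D.u c - e).val < (D.o c - e).val

theorem d_eq_card_warpingCrossings (e : ZMod (2 * n)) : D.d e = (D.warpingCrossings e).card :=
  rfl

theorem not_mem_warpingCrossings_o (c : Fin n) : c ∉ D.warpingCrossings (D.o c) := by
  simp [warpingCrossings]

theorem mem_warpingCrossings_u (c : Fin n) : c ∈ D.warpingCrossings (D.u c) := by
  simpa [warpingCrossings, Nat.pos_iff_ne_zero, sub_eq_zero] using D.o_ne_u c c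

variable [NeZero n]

theorem mem_warpingCrossings_add_one {c : Fin n} {e : ZMod (2 * n)} :
    c ∈ D.warpingCrossings (e + 1) ↔ (c ∈ D.warpingCrossings e ∨ D.o c = e) ∧ D.u c ≠ e := by
  simp only [warpingCrossings, mem_filter, mem_univ, true_and]
  exact ZMod.val_sub_add_one_lt_iff (D.o_ne_u c c).symm e

theorem warpingCrossings_o_add_one (c : Fin n) :
    D.warpingCrossings (D.o c + 1) = insert c (D.warpingCrossings (D.o c)) := by
  ext c'
  rw [mem_warpingCrossings_add_one, mem_insert, D.o_injective.eq_iff]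
  have := (D.o_ne_u c c').symm
  tauto

theorem warpingCrossings_u_add_one (c : Fin n) :
    D.warpingCrossings (D.u c + 1) = (D.warpingCrossings (D.u c)).erase c := by
  ext c'
  rw [mem_warpingCrossings_add_one, mem_erase, ne_eq, D.u_injective.eq_iff]
  have := D.o_ne_u c' c
  tauto

theorem d_o_add_one (c : Fin n) : D.d (D.o c + 1) = D.d (D.o c) + 1 := by
  rw [d_eq_card_warpingCrossings, warpingCrossings_o_add_one,
    card_insert_of_notMem (D.not_mem_warpingCrossings_o c), d_eq_card_warpingCrossings]

theorem d_u_add_one (c : Fin n) : D.d (D.u c + 1) + 1 = D.d (D.u c) := by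
  rw [d_eq_card_warpingCrossings, warpingCrossings_u_add_one,
    card_erase_add_one (D.mem_warpingCrossings_u c), d_eq_card_warpingCrossings]

end GaussCode

theorem sum_under_weights_eq_X_mul_warping_crossing_poly_general
    (n : ℕ) (D : GaussCode n) :
    ∑ c : Fin n, (Polynomial.X : Polynomial ℤ) ^ D.d (D.u c)
      = Polynomial.X * D.Xpoly := by
  obtain rfl | hn := n.eq_zero_or_pos
  · simp [GaussCode.Xpoly]
  have : NeZero n := ⟨hn.ne'⟩
  have hrotate : ∑ e, (X : ℤ[X]) ^ D.d (e + 1) = ∑ e, X ^ D.d e :=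
    Equiv.sum_comp (Equiv.addRight 1) fun e => (X : ℤ[X]) ^ D.d e
  have hover : ∑ c, (X : ℤ[X]) ^ D.d (D.o c + 1) = X * D.Xpoly := by
    simp only [GaussCode.Xpoly, mul_sum, D.d_o_add_one, pow_succ']
  have hunder : X * ∑ c, (X : ℤ[X]) ^ D.d (D.u c + 1) = ∑ c, X ^ D.d (D.u c) := by
    simp only [mul_sum, ← D.d_u_add_one, pow_succ']
  rw [D.sum_eq_sum_o_add_sum_u, D.sum_eq_sum_o_add_sum_u (fun e => X ^ D.d e), hover] at hrotate
  change _ = D.Xpoly + _ at hrotate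
  have hcancel : (X - 1) * ∑ c, (X : ℤ[X]) ^ D.d (D.u c) = (X - 1) * (X * D.Xpoly) := by
    linear_combination (-X : ℤ[X]) * hrotate + hunder
  exact mul_left_cancel₀ (by simpa using X_sub_C_ne_zero (1 : ℤ)) hcancel

/-- The sum of `t^(d (u c))` over all crossings `c` equals `t ⬝ X_D(t)`. -/
theorem sum_under_weights_eq_X_mul_warping_crossing_poly
    (n : ℕ) (hn : 1 ≤ n) (D : GaussCode n) :
    ∑ c : Fin n, (Polynomial.X : Polynomial ℤ) ^ D.d (D.u c)
      = Polynomial.X * D.Xpoly :=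
  sum_under_weights_eq_X_mul_warping_crossing_poly_general n D
end

section
/- Let P be a knot projection with n ≥ 1 crossings. Then the sum of the warping polynomials W_D(t) over all 2^n states D of P equals 2n(1 + t)^n in ℤ[t]. -/
open Polynomial Finset
open scoped Classical

/-- `g` is an oriented Gauss code with `n` crossings: each crossing has exactly one
over-passage and exactly one under-passage. -/
def IsGaussCode (n : ℕ) (g : ZMod (2 * n) → Fin n × Bool) : Prop :=
  ∀ c : Fin n, (∃! e, g e = (c, true)) ∧ (∃! e, g e = (c, false))

/-- The warping degree of the base position `e` of the code `g`: the number of crossings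
whose under-passage occurs strictly before its over-passage in the list
`e, e+1, …, e+2n−1`. -/

noncomputable def dRaw (n : ℕ) (g : ZMod (2 * n) → Fin n × Bool) (e : ZMod (2 * n)) : ℕ :=
  (Finset.univ.filter fun c : Fin n =>
    ∃ j ∈ Finset.range (2 * n), ∃ k ∈ Finset.range (2 * n),
      j < k ∧ g (e + (j : ZMod (2 * n))) = (c, false)
            ∧ g (e + (k : ZMod (2 * n))) = (c, true)).card

/-- The warping crossing polynomial of the code `g`: the sum of the crossing weights
`t^(d (o c))` over all crossings `c`, i.e. the sum of `t^(d e)` over all over-passage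
positions `e`. -/
noncomputable def XRaw (n : ℕ) (g : ZMod (2 * n) → Fin n × Bool) : Polynomial ℤ :=
  ∑ k ∈ Finset.range (2 * n),
    if (g (k : ZMod (2 * n))).2 = true
    then (Polynomial.X : Polynomial ℤ) ^ dRaw n g (k : ZMod (2 * n)) else 0

/-- The warping polynomial of the code `g`: the sum of `t^(d e)` over all positions. -/
noncomputable def WRaw (n : ℕ) (g : ZMod (2 * n) → Fin n × Bool) : Polynomial ℤ :=
  ∑ k ∈ Finset.range (2 * n), (Polynomial.X : Polynomial ℤ) ^ dRaw n g (k : ZMod (2 * n))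

/-- `p` is a knot projection with `n` crossings: every crossing has exactly two
preimage positions. -/
def IsProjection (n : ℕ) (p : ZMod (2 * n) → Fin n) : Prop :=
  ∀ c : Fin n, ∃ e₁ e₂ : ZMod (2 * n), e₁ ≠ e₂ ∧ ∀ e, p e = c ↔ e = e₁ ∨ e = e₂

/-- The finset of all states of the projection `p`: Gauss codes obtained from `p` by
giving each crossing over/under information. -/

noncomputable def statesFinset (n : ℕ) (hn : 1 ≤ n) (p : ZMod (2 * n) → Fin n) :
    Finset (ZMod (2 * n) → Fin n × Bool) :=
  haveI : NeZero (2 * n) := ⟨by omega⟩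
  Finset.univ.filter fun g => IsGaussCode n g ∧ ∀ e, (g e).1 = p e

/-!
Fix for each crossing `c` its two positions `ε₁ c ≠ ε₂ c` in the projection. A state is then
the same as a choice `s : Fin n → Bool` of the passage placed at `ε₁ c`. Seen from a base point
`e`, the crossing `c` counts towards the warping degree exactly when its under-passage comes
first, that is, when `s c` differs from a bit depending only on `e` and `c`. Hence for every
base point the sum of `t ^ d e` over all states is `∏ c, (1 + t) = (1 + t) ^ n`, and summing
over the `2n` base points gives `2n (1 + t) ^ n`.
-/

theorem sum_pow_card_ne {R ι : Type*} [CommSemiring R] [Fintype ι] [DecidableEq ι]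
    (x : R) (f : ι → Bool) :
    ∑ s : ι → Bool, x ^ #{i | s i ≠ f i} = (1 + x) ^ Fintype.card ι := by
  have pow_eq_prod (s : ι → Bool) : x ^ #{i | s i ≠ f i} = ∏ i, if s i ≠ f i then x else 1 := by
    rw [prod_ite, prod_const, prod_const, one_pow, mul_one]
  have sum_bool (b : Bool) : ∑ a : Bool, (if a ≠ b then x else 1) = 1 + x := by
    cases b <;> simp [add_comm]
  simp_rw [pow_eq_prod, ← Fintype.prod_sum (fun i a => if a ≠ f i then x else 1), sum_bool,
    prod_const, card_univ]

theorem dRaw_eq_card_val_lt {n : ℕ} [NeZero n] {g : ZMod (2 * n) → Fin n × Bool}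
    {u o : Fin n → ZMod (2 * n)} (hu : ∀ c e, g e = (c, false) ↔ e = u c)
    (ho : ∀ c e, g e = (c, true) ↔ e = o c) (e : ZMod (2 * n)) :
    dRaw n g e = #{c | (u c - e).val < (o c - e).val} := by
  unfold dRaw
  congr 1
  ext c
  simp only [mem_filter, mem_univ, true_and, mem_range, hu, ho]
  constructor
  · rintro ⟨j, hj, k, hk, hjk, hju, hko⟩
    rwa [← hju, ← hko, add_sub_cancel_left, add_sub_cancel_left, ZMod.val_natCast_of_lt hj,
      ZMod.val_natCast_of_lt hk]
  · intro h
    exact ⟨_, ZMod.val_lt _, _, ZMod.val_lt _, h, by simp, by simp⟩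

section States

variable {n : ℕ} {p : ZMod (2 * n) → Fin n} {ε₁ ε₂ : Fin n → ZMod (2 * n)}

def stateOf (p : ZMod (2 * n) → Fin n) (ε₁ : Fin n → ZMod (2 * n)) (s : Fin n → Bool)
    (e : ZMod (2 * n)) : Fin n × Bool :=
  (p e, if e = ε₁ (p e) then s (p e) else !s (p e))

theorem stateOf_apply_ε₁ (hp : ∀ c e, p e = c ↔ e = ε₁ c ∨ e = ε₂ c) (s : Fin n → Bool)
    (c : Fin n) : stateOf p ε₁ s (ε₁ c) = (c, s c) := by
  simp [stateOf, (hp c _).2 (Or.inl rfl)]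

theorem stateOf_apply_ε₂ (hp : ∀ c e, p e = c ↔ e = ε₁ c ∨ e = ε₂ c) (hε : ∀ c, ε₁ c ≠ ε₂ c)
    (s : Fin n → Bool) (c : Fin n) : stateOf p ε₁ s (ε₂ c) = (c, !s c) := by
  simp [stateOf, (hp c _).2 (Or.inr rfl), (hε c).symm]

theorem stateOf_eq_iff (hp : ∀ c e, p e = c ↔ e = ε₁ c ∨ e = ε₂ c) (hε : ∀ c, ε₁ c ≠ ε₂ c)
    {s : Fin n → Bool} {e : ZMod (2 * n)} {c : Fin n} {b : Bool} :
    stateOf p ε₁ s e = (c, b) ↔ e = if s c = b then ε₁ c else ε₂ c := by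
  constructor
  · intro h
    rcases (hp c e).1 (congrArg Prod.fst h) with rfl | rfl
    · rw [stateOf_apply_ε₁ hp] at h
      simp_all
    · rw [stateOf_apply_ε₂ hp hε] at h
      cases h
      simp
  · split_ifs with h <;> rintro rfl
    · rw [stateOf_apply_ε₁ hp, h]
    · rw [stateOf_apply_ε₂ hp hε]
      simpa [Bool.eq_not_iff] using h

theorem isGaussCode_stateOf (hp : ∀ c e, p e = c ↔ e = ε₁ c ∨ e = ε₂ c) (hε : ∀ c, ε₁ c ≠ ε₂ c)
    (s : Fin n → Bool) : IsGaussCode n (stateOf p ε₁ s) := fun c => by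
  simp only [stateOf_eq_iff hp hε]
  exact ⟨existsUnique_eq, existsUnique_eq⟩

theorem stateOf_injective (hp : ∀ c e, p e = c ↔ e = ε₁ c ∨ e = ε₂ c) :
    Function.Injective (stateOf p ε₁) := fun s s' h => funext fun c => by
  simpa [stateOf_apply_ε₁ hp] using congrFun h (ε₁ c)

theorem eq_stateOf_of_isGaussCode (hp : ∀ c e, p e = c ↔ e = ε₁ c ∨ e = ε₂ c)
    (hε : ∀ c, ε₁ c ≠ ε₂ c) {g : ZMod (2 * n) → Fin n × Bool} (hg : IsGaussCode n g)
    (hgp : ∀ e, (g e).1 = p e) : g = stateOf p ε₁ fun c => (g (ε₁ c)).2 := by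
  have hg₁ (c : Fin n) : g (ε₁ c) = (c, (g (ε₁ c)).2) :=
    Prod.ext ((hgp _).trans ((hp c _).2 (Or.inl rfl))) rfl
  have hg₂ (c : Fin n) : g (ε₂ c) = (c, !(g (ε₁ c)).2) := by
    have hfst : (g (ε₂ c)).1 = c := (hgp _).trans ((hp c _).2 (Or.inr rfl))
    refine Prod.ext hfst (Bool.eq_not_iff.2 fun hbit => ?_)
    have h₂ : g (ε₂ c) = (c, (g (ε₁ c)).2) := Prod.ext hfst hbit
    have unique : ∀ b, ∃! e, g e = (c, b) := fun b => by cases b; exacts [(hg c).2, (hg c).1]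
    exact hε c ((unique _).unique (hg₁ c) h₂)
  funext e
  rcases (hp (p e) e).1 rfl with h | h <;> rw [h]
  · rw [stateOf_apply_ε₁ hp, ← hg₁]
  · rw [stateOf_apply_ε₂ hp hε, ← hg₂]

theorem statesFinset_eq_map (hn : 1 ≤ n) (hp : ∀ c e, p e = c ↔ e = ε₁ c ∨ e = ε₂ c)
    (hε : ∀ c, ε₁ c ≠ ε₂ c) :
    statesFinset n hn p = univ.map ⟨stateOf p ε₁, stateOf_injective hp⟩ := by
  ext g
  simp only [statesFinset, mem_filter, mem_univ, true_and, mem_map, Function.Embedding.coeFn_mk]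
  constructor
  · rintro ⟨hg, hgp⟩
    exact ⟨_, (eq_stateOf_of_isGaussCode hp hε hg hgp).symm⟩
  · rintro ⟨s, rfl⟩
    exact ⟨isGaussCode_stateOf hp hε s, fun _ => rfl⟩

theorem dRaw_stateOf [NeZero n] (hp : ∀ c e, p e = c ↔ e = ε₁ c ∨ e = ε₂ c)
    (hε : ∀ c, ε₁ c ≠ ε₂ c) (s : Fin n → Bool) (e : ZMod (2 * n)) :
    dRaw n (stateOf p ε₁ s) e = #{c | s c ≠ decide ((ε₁ c - e).val < (ε₂ c - e).val)} := by
  rw [dRaw_eq_card_val_lt (g := stateOf p ε₁ s)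
    (u := fun c => if s c = false then ε₁ c else ε₂ c)
    (o := fun c => if s c = true then ε₁ c else ε₂ c)
    (fun c _ => stateOf_eq_iff hp hε) (fun c _ => stateOf_eq_iff hp hε)]
  congr 1
  ext c
  have hval : (ε₁ c - e).val ≠ (ε₂ c - e).val := fun h =>
    hε c (by simpa using ZMod.val_injective _ h)
  cases hs : s c <;> simp [hs]; omega

end States

/-- For a knot projection `P` with `n ≥ 1` crossings, the sum of the warping polynomials
over all states is `2n(1 + t)^n`. -/
theorem state_sum_Wpoly (n : ℕ) (hn : 1 ≤ n) (p : ZMod (2 * n) → Fin n)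
    (hp : IsProjection n p) :
    ∑ g ∈ statesFinset n hn p, WRaw n g
      = 2 * (n : Polynomial ℤ) * (1 + Polynomial.X) ^ n := by
  have : NeZero n := ⟨by omega⟩
  choose ε₁ ε₂ hε hp using hp
  rw [statesFinset_eq_map hn hp hε, sum_map]
  simp only [Function.Embedding.coeFn_mk, WRaw]
  rw [sum_comm]
  simp_rw [dRaw_stateOf hp hε, sum_pow_card_ne, Fintype.card_fin]
  rw [sum_const, card_range, nsmul_eq_mul]
  push_cast
  ring
end
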